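/- Let n ≥ 2 and let J be the almost-surely unique index maximizing X_i over i ∈ {1,…,n}. Then the variance of the max estimator ρ̂_max = Y_J / E[X_J] satisfies Var(ρ̂_max) = (ρ² · Var(X_J) + (1 − ρ²)) / (E[X_J])². -/

import Mathlib

/-!
Write `Y_J = ρ X_J + √(1 - ρ²) Z_J`. Two of the `X_i` coincide only with probability zero, so
up to null sets the event `{J = i}` is determined by the vector `(X_j)_{j < n}`, which is
independent of every `Z_i`. Splitting according to the value of `J` then shows that `Z_J` is
again standard normal and independent of `((X_j)_{j < n}, J)`, hence of `X_J`. Therefore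
`Var(Y_J) = ρ² Var(X_J) + (1 - ρ²)`, and dividing by the constant `E[X_J]` gives the formula.
-/

set_option autoImplicit false

open MeasureTheory ProbabilityTheory Filter

namespace MeasureTheory

variable {Ω : Type*} {mΩ : MeasurableSpace Ω} {μ : Measure Ω}

lemma measure_eq_tsum_inter_preimage_singleton {ι : Type*} [Countable ι] [MeasurableSpace ι]
    [MeasurableSingletonClass ι] {K : Ω → ι} (hK : Measurable K) (A : Set Ω) :
    μ A = ∑' i, μ (A ∩ K ⁻¹' {i}) := by
  have := tsum_measure_preimage_singleton (μ := μ.restrict A) Set.countable_univ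
    fun i _ ↦ hK (measurableSet_singleton i)
  rw [Set.preimage_univ, Measure.restrict_apply_univ,
    tsum_univ (f := fun i ↦ μ.restrict A (K ⁻¹' {i}))] at this
  rw [← this]
  congr 1 with i
  rw [Measure.restrict_apply (hK (measurableSet_singleton i)), Set.inter_comm]

end MeasureTheory

namespace ProbabilityTheory

variable {Ω : Type*} {mΩ : MeasurableSpace Ω} {μ : Measure Ω}

lemma HasLaw.fst {α β : Type*} [MeasurableSpace α] [MeasurableSpace β] {ν₁ : Measure α}
    {ν₂ : Measure β} [IsProbabilityMeasure ν₂] {X : Ω → α} {Z : Ω → β}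
    (h : HasLaw (fun ω ↦ (X ω, Z ω)) (ν₁.prod ν₂) μ) : HasLaw X ν₁ μ :=
  measurePreserving_fst.hasLaw.comp h

lemma HasLaw.snd {α β : Type*} [MeasurableSpace α] [MeasurableSpace β] {ν₁ : Measure α}
    {ν₂ : Measure β} [IsProbabilityMeasure ν₁] [SFinite ν₂] {X : Ω → α} {Z : Ω → β}
    (h : HasLaw (fun ω ↦ (X ω, Z ω)) (ν₁.prod ν₂) μ) : HasLaw Z ν₂ μ :=
  measurePreserving_snd.hasLaw.comp h

lemma HasLaw.memLp_gaussianReal {X : Ω → ℝ} {m : ℝ} {v : NNReal}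
    (h : HasLaw X (gaussianReal m v) μ) {p : ENNReal} (hp : p ≠ ⊤) : MemLp X p μ :=
  (memLp_map_measure_iff aestronglyMeasurable_id h.aemeasurable).1
    (h.map_eq ▸ memLp_id_gaussianReal' p hp)

lemma IndepFun.iIndepFun_fin_two [IsProbabilityMeasure μ] {α : Type*} [MeasurableSpace α]
    {f g : Ω → α} (hf : AEMeasurable f μ) (hg : AEMeasurable g μ) (h : IndepFun f g μ) :
    iIndepFun ![f, g] μ := by
  have hfg : ∀ i, AEMeasurable (![f, g] i) μ := Fin.forall_fin_two.2 ⟨hf, hg⟩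
  rw [iIndepFun_iff_map_fun_eq_pi_map hfg]
  apply MeasurableEquiv.finTwoArrow.map_measurableEquiv_injective
  have : ∀ i, μ.map (![f, g] i) = ![μ.map f, μ.map g] i := Fin.forall_fin_two.2 ⟨rfl, rfl⟩
  rw [funext this, (measurePreserving_finTwoArrow_vec _ _).map_eq,
    AEMeasurable.map_map_of_aemeasurable MeasurableEquiv.finTwoArrow.measurable.aemeasurable
      (aemeasurable_pi_lambda _ hfg)]
  exact h.map_prod_eq_prod_map_map hf hg

lemma iIndepFun.uncurry_fin_two {ι α : Type*} [MeasurableSpace α] {X Z : ι → Ω → α}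
    (hX : ∀ i, Measurable (X i)) (hZ : ∀ i, Measurable (Z i))
    (h : iIndepFun (fun i ω ↦ (X i ω, Z i ω)) μ) (hXZ : ∀ i, IndepFun (X i) (Z i) μ) :
    iIndepFun (fun p : ι × Fin 2 ↦ ![X p.1, Z p.1] p.2) μ := by
  have := h.isProbabilityMeasure
  refine iIndepFun_uncurry' (X := fun i ↦ ![X i, Z i])
    (fun i ↦ Fin.forall_fin_two.2 ⟨hX i, hZ i⟩) ?_
    (fun i ↦ (hXZ i).iIndepFun_fin_two (hX i).aemeasurable (hZ i).aemeasurable)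
  convert h.comp (fun _ ↦ MeasurableEquiv.finTwoArrow.symm) (fun _ ↦ MeasurableEquiv.measurable _)
    using 1
  ext i ω j
  fin_cases j <;> rfl

lemma IndepFun.ae_ne [IsFiniteMeasure μ] {α : Type*} [MeasurableSpace α] [MeasurableEq α]
    {U V : Ω → α} (hU : AEMeasurable U μ) (hV : AEMeasurable V μ)
    [NullSingletonClass (μ.map V)] (h : IndepFun U V μ) : ∀ᵐ ω ∂μ, U ω ≠ V ω := by
  rw [ae_iff]
  simp only [ne_eq, not_not]
  change μ ((fun ω ↦ (U ω, V ω)) ⁻¹' Set.diagonal α) = 0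
  rw [← Measure.map_apply_of_aemeasurable (hU.prodMk hV) measurableSet_diagonal,
    h.map_prod_eq_prod_map_map hU hV, Measure.prod_apply measurableSet_diagonal]
  simp [Set.preimage, Set.diagonal]

lemma iIndepFun.ae_injective [IsFiniteMeasure μ] {ι α : Type*} [Countable ι]
    [MeasurableSpace α] [MeasurableEq α] {X : ι → Ω → α} (hX : ∀ i, AEMeasurable (X i) μ)
    [∀ i, NullSingletonClass (μ.map (X i))] (h : iIndepFun X μ) :
    ∀ᵐ ω ∂μ, Function.Injective (X · ω) := by
  have hne : ∀ᵐ ω ∂μ, ∀ i j, i ≠ j → X i ω ≠ X j ω := by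
    simp only [ae_all_iff, eventually_imp_distrib_left]
    exact fun i j hij ↦ (h.indepFun hij).ae_ne (hX i) (hX j)
  filter_upwards [hne] with ω hω i j
  exact not_imp_not.1 (hω i j)

lemma hasLaw_prodMk_select [IsFiniteMeasure μ] {ι E β : Type*} [Countable ι] [MeasurableSpace ι]
    [MeasurableSingletonClass ι] [MeasurableSpace E] [MeasurableSpace β] {ν : Measure β}
    [SigmaFinite ν] {W : Ω → E} {K : Ω → ι} {Z : ι → Ω → β} {S : ι → Set E}
    (hW : Measurable W) (hK : Measurable K) (hZ : ∀ i, Measurable (Z i))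
    (hS : ∀ i, MeasurableSet (S i)) (hKS : ∀ i, K ⁻¹' {i} =ᵐ[μ] W ⁻¹' S i)
    (hind : ∀ i, IndepFun W (Z i) μ) (hlaw : ∀ i, HasLaw (Z i) ν μ) :
    HasLaw (fun ω ↦ ((W ω, K ω), Z (K ω) ω)) ((μ.map fun ω ↦ (W ω, K ω)).prod ν) μ := by
  have hWK : Measurable fun ω ↦ (W ω, K ω) := hW.prodMk hK
  have hZK : Measurable fun ω ↦ Z (K ω) ω :=
    (measurable_from_prod_countable_left (f := fun p : Ω × ι ↦ Z p.2 p.1) hZ).comp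
      (measurable_id.prodMk hK)
  refine ⟨(hWK.prodMk hZK).aemeasurable, (Measure.prod_eq fun s t hs ht ↦ ?_).symm⟩
  rw [Measure.map_apply (hWK.prodMk hZK) (hs.prod ht), Measure.map_apply hWK hs]
  set s' : ι → Set E := fun i ↦ (·, i) ⁻¹' s
  have hs' : ∀ i, MeasurableSet (s' i) := fun i ↦ measurable_prodMk_right hs
  have hfiber : ∀ i, ((fun ω ↦ (W ω, K ω)) ⁻¹' s ∩ K ⁻¹' {i} : Set Ω) =ᵐ[μ]
      W ⁻¹' (s' i ∩ S i) := by
    intro i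
    have : (fun ω ↦ (W ω, K ω)) ⁻¹' s ∩ K ⁻¹' {i} = W ⁻¹' s' i ∩ K ⁻¹' {i} := by
      ext ω
      constructor <;> rintro ⟨h, rfl : K ω = i⟩ <;> exact ⟨h, rfl⟩
    rw [this]
    exact (ae_eq_refl _).inter (hKS i)
  calc μ ((fun ω ↦ ((W ω, K ω), Z (K ω) ω)) ⁻¹' s ×ˢ t)
      = ∑' i, μ ((fun ω ↦ ((W ω, K ω), Z (K ω) ω)) ⁻¹' s ×ˢ t ∩ K ⁻¹' {i}) :=
        measure_eq_tsum_inter_preimage_singleton hK _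
    _ = ∑' i, μ (W ⁻¹' (s' i ∩ S i) ∩ Z i ⁻¹' t) := by
        congr 1 with i
        have : (fun ω ↦ ((W ω, K ω), Z (K ω) ω)) ⁻¹' s ×ˢ t ∩ K ⁻¹' {i}
            = ((fun ω ↦ (W ω, K ω)) ⁻¹' s ∩ K ⁻¹' {i}) ∩ Z i ⁻¹' t := by
          ext ω
          constructor
          · rintro ⟨⟨h, h'⟩, rfl : K ω = i⟩
            exact ⟨⟨h, rfl⟩, h'⟩
          · rintro ⟨⟨h, rfl : K ω = i⟩, h'⟩
            exact ⟨⟨h, h'⟩, rfl⟩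
        rw [this]
        exact measure_congr ((hfiber i).inter (ae_eq_refl _))
    _ = ∑' i, μ ((fun ω ↦ (W ω, K ω)) ⁻¹' s ∩ K ⁻¹' {i}) * ν t := by
        congr 1 with i
        rw [(hind i).measure_inter_preimage_eq_mul _ _ ((hs' i).inter (hS i)) ht,
          measure_congr (hfiber i), ← (hlaw i).map_eq, Measure.map_apply (hZ i) ht]
    _ = μ ((fun ω ↦ (W ω, K ω)) ⁻¹' s) * ν t := by
        rw [ENNReal.tsum_mul_right, ← measure_eq_tsum_inter_preimage_singleton hK]

lemma IndepFun.variance_const_mul_add_const_mul {A B : Ω → ℝ} (h : IndepFun A B μ)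
    (hA : MemLp A 2 μ) (hB : MemLp B 2 μ) (a b : ℝ) :
    Var[fun ω ↦ a * A ω + b * B ω; μ] = a ^ 2 * Var[A; μ] + b ^ 2 * Var[B; μ] := by
  rw [(h.comp (measurable_const_mul a) (measurable_const_mul b)).variance_fun_add
    (hA.const_mul a) (hB.const_mul b)]
  exact congrArg₂ (· + ·) (variance_const_mul a A μ) (variance_const_mul b B μ)

lemma iIndepFun.indepFun_pi_fst_snd {X Z : ℕ → Ω → ℝ} (hX : ∀ i, Measurable (X i))
    (hZ : ∀ i, Measurable (Z i)) (h : iIndepFun (fun p : ℕ × Fin 2 ↦ ![X p.1, Z p.1] p.2) μ)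
    (n i : ℕ) : IndepFun (fun ω (j : Fin n) ↦ X j ω) (Z i) μ := by
  have hmeas : ∀ p : ℕ × Fin 2, Measurable (![X p.1, Z p.1] p.2) := by
    rintro ⟨k, j⟩
    fin_cases j
    exacts [hX k, hZ k]
  refine (h.indepFun_finset (Finset.range n ×ˢ {0}) {(i, 1)} (by simp) hmeas).comp
    (φ := fun v (j : Fin n) ↦ v ⟨((j : ℕ), 0), by simp⟩)
    (ψ := fun v ↦ v ⟨(i, 1), Finset.mem_singleton_self _⟩) ?_ ?_
  · exact measurable_pi_lambda _ fun j ↦ measurable_pi_apply _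
  · exact measurable_pi_apply _

end ProbabilityTheory

lemma eq_iff_forall_le_of_injective {α : Type*} [PartialOrder α] {x : ℕ → α}
    (hx : Function.Injective x) {n J : ℕ} (hJ : J < n ∧ ∀ i < n, x i ≤ x J) (i : ℕ) :
    J = i ↔ i < n ∧ ∀ j < n, x j ≤ x i :=
  ⟨fun h ↦ h ▸ hJ, fun ⟨hi, hmax⟩ ↦ hx (le_antisymm (hmax J hJ.1) (hJ.2 i hi))⟩

-- `Fin.ofNat n i` wraps around modulo `n`; the conjunct `i < n` makes this harmless.
def argmaxSet (n : ℕ) [NeZero n] (i : ℕ) : Set (Fin n → ℝ) :=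
  {w | i < n ∧ ∀ j, w j ≤ w (Fin.ofNat n i)}

lemma measurableSet_argmaxSet (n : ℕ) [NeZero n] (i : ℕ) : MeasurableSet (argmaxSet n i) := by
  simp only [argmaxSet, Set.ofPred_and, Set.ofPred_forall]
  exact (MeasurableSet.const _).inter
    (.iInter fun j ↦ measurableSet_le (measurable_pi_apply j) (measurable_pi_apply _))

section Argmax

variable {Ω : Type*} {mΩ : MeasurableSpace Ω} {μ : Measure Ω}

lemma preimage_argmax_ae_eq {X : ℕ → Ω → ℝ} {n : ℕ} [NeZero n] {J : Ω → ℕ}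
    (hinj : ∀ᵐ ω ∂μ, Function.Injective (X · ω))
    (hJmax : ∀ᵐ ω ∂μ, J ω < n ∧ ∀ i < n, X i ω ≤ X (J ω) ω) (i : ℕ) :
    J ⁻¹' {i} =ᵐ[μ] (fun ω (j : Fin n) ↦ X j ω) ⁻¹' argmaxSet n i := by
  rw [eventuallyEq_set]
  filter_upwards [hJmax, hinj] with ω hJω hω
  refine (eq_iff_forall_le_of_injective hω hJω i).trans (and_congr_right fun hi ↦ ?_)
  simp only [Fin.val_ofNat, Nat.mod_eq_of_lt hi, Fin.forall_iff]

lemma hasLaw_prodMk_argmax [IsProbabilityMeasure μ] {X Z : ℕ → Ω → ℝ}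
    (hX : ∀ i, Measurable (X i)) (hZ : ∀ i, Measurable (Z i))
    (hindep : iIndepFun (fun i ω ↦ (X i ω, Z i ω)) μ)
    (hlaw : ∀ i, HasLaw (fun ω ↦ (X i ω, Z i ω)) ((gaussianReal 0 1).prod (gaussianReal 0 1)) μ)
    {n : ℕ} [NeZero n] {J : Ω → ℕ} (hJ : Measurable J)
    (hJmax : ∀ᵐ ω ∂μ, J ω < n ∧ ∀ i < n, X i ω ≤ X (J ω) ω) :
    HasLaw (fun ω ↦ (((fun j : Fin n ↦ X j ω), J ω), Z (J ω) ω))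
      ((μ.map fun ω ↦ ((fun j : Fin n ↦ X j ω), J ω)).prod (gaussianReal 0 1)) μ := by
  have hXlaw : ∀ i, HasLaw (X i) (gaussianReal 0 1) μ := fun i ↦ (hlaw i).fst
  have hZlaw : ∀ i, HasLaw (Z i) (gaussianReal 0 1) μ := fun i ↦ (hlaw i).snd
  have hflat := hindep.uncurry_fin_two hX hZ fun i ↦
    (indepFun_iff_hasLaw_prodMk_prod (hXlaw i) (hZlaw i)).2 (hlaw i)
  have hXindep : iIndepFun X μ := hflat.precomp (g := fun i ↦ (i, 0)) (Prod.mk_left_injective 0)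
  have : ∀ i, NullSingletonClass (μ.map (X i)) := fun i ↦
    (hXlaw i).map_eq ▸ nullSingletonClass_gaussianReal one_ne_zero
  exact hasLaw_prodMk_select (measurable_pi_lambda _ fun j ↦ hX j) hJ hZ
    (measurableSet_argmaxSet n)
    (preimage_argmax_ae_eq (hXindep.ae_injective fun i ↦ (hX i).aemeasurable) hJmax)
    (hflat.indepFun_pi_fst_snd hX hZ n) hZlaw

theorem variance_const_mul_add_const_mul_argmax [IsProbabilityMeasure μ] {X Z : ℕ → Ω → ℝ}
    (hX : ∀ i, Measurable (X i)) (hZ : ∀ i, Measurable (Z i))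
    (hindep : iIndepFun (fun i ω ↦ (X i ω, Z i ω)) μ)
    (hlaw : ∀ i, HasLaw (fun ω ↦ (X i ω, Z i ω)) ((gaussianReal 0 1).prod (gaussianReal 0 1)) μ)
    {n : ℕ} {J : Ω → ℕ} (hJ : Measurable J)
    (hJmax : ∀ᵐ ω ∂μ, J ω < n ∧ ∀ i < n, X i ω ≤ X (J ω) ω) (a b : ℝ) :
    Var[fun ω ↦ a * X (J ω) ω + b * Z (J ω) ω; μ]
      = a ^ 2 * Var[fun ω ↦ X (J ω) ω; μ] + b ^ 2 := by
  have : NeZero n := ⟨fun hn ↦ by obtain ⟨ω, hω⟩ := hJmax.exists; omega⟩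
  set W : Ω → Fin n → ℝ := fun ω j ↦ X j ω
  have hWJ : Measurable fun ω ↦ (W ω, J ω) := (measurable_pi_lambda W fun j ↦ hX j).prodMk hJ
  have hjoint := hasLaw_prodMk_argmax hX hZ hindep hlaw hJ hJmax
  have := Measure.isProbabilityMeasure_map (μ := μ) hWJ.aemeasurable
  have hZJ : HasLaw (fun ω ↦ Z (J ω) ω) (gaussianReal 0 1) μ := hjoint.snd
  have heval : Measurable fun p : (Fin n → ℝ) × ℕ ↦ p.1 (Fin.ofNat n p.2) :=
    measurable_from_prod_countable_left fun i ↦ measurable_pi_apply (Fin.ofNat n i)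
  have hXJ : (fun ω ↦ W ω (Fin.ofNat n (J ω))) =ᵐ[μ] fun ω ↦ X (J ω) ω := by
    filter_upwards [hJmax] with ω hω
    simp [W, Nat.mod_eq_of_lt hω.1]
  have hXZ : IndepFun (fun ω ↦ X (J ω) ω) (fun ω ↦ Z (J ω) ω) μ :=
    (((indepFun_iff_hasLaw_prodMk_prod ⟨hWJ.aemeasurable, rfl⟩ hZJ).2 hjoint).comp heval
      measurable_id).congr hXJ (ae_eq_refl _)
  have hXL2 : MemLp (fun ω ↦ X (J ω) ω) 2 μ :=
    (MemLp.of_eval fun j : Fin n ↦ (hlaw j).fst.memLp_gaussianReal (p := 2) (by simp)).of_le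
      ((heval.comp hWJ).aestronglyMeasurable.congr hXJ)
      (by filter_upwards [hXJ] with ω hω using hω ▸ norm_le_pi_norm (W ω) _)
  rw [hXZ.variance_const_mul_add_const_mul hXL2 (hZJ.memLp_gaussianReal (by simp)),
    hZJ.variance_eq, variance_id_gaussianReal]
  simp

end Argmax

theorem stmt1_general
    {Ω : Type*} [MeasureSpace Ω] [IsProbabilityMeasure (ℙ : Measure Ω)]
    (ρ : ℝ) (hρ : ρ ∈ Set.Icc (-1 : ℝ) 1)
    (X Z : ℕ → Ω → ℝ)
    (hindep : iIndepFun (fun i ω => (X i ω, Z i ω)) ℙ)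
    (hlaw : ∀ i, Measure.map (fun ω => (X i ω, Z i ω)) ℙ
      = (gaussianReal 0 1).prod (gaussianReal 0 1))
    (Y : ℕ → Ω → ℝ)
    (hY : ∀ i ω, Y i ω = ρ * X i ω + Real.sqrt (1 - ρ ^ 2) * Z i ω)
    (n : ℕ)
    (J : Ω → ℕ) (hJmeas : Measurable J)
    (hJ : ∀ᵐ ω ∂ℙ, J ω < n ∧ ∀ i < n, X i ω ≤ X (J ω) ω) :
    variance (fun ω => Y (J ω) ω / (∫ ω', X (J ω') ω')) ℙ
      = (ρ ^ 2 * variance (fun ω => X (J ω) ω) ℙ + (1 - ρ ^ 2))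
        / (∫ ω', X (J ω') ω') ^ 2 := by
  set c := ∫ ω', X (J ω') ω'
  set s := Real.sqrt (1 - ρ ^ 2)
  have hs : s ^ 2 = 1 - ρ ^ 2 := Real.sq_sqrt (by nlinarith [hρ.1, hρ.2])
  have hP : ∀ i, AEMeasurable (fun ω ↦ (X i ω, Z i ω)) ℙ := fun i ↦
    AEMeasurable.of_map_ne_zero (by rw [hlaw i]; exact IsProbabilityMeasure.ne_zero _)
  set P := fun i ↦ (hP i).mk
  have hPae : ∀ᵐ ω ∂ℙ, ∀ i, (X i ω, Z i ω) = P i ω := ae_all_iff.2 fun i ↦ (hP i).ae_eq_mk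
  have hvar := variance_const_mul_add_const_mul_argmax
    (X := fun i ω ↦ (P i ω).1) (Z := fun i ω ↦ (P i ω).2)
    (fun i ↦ (hP i).measurable_mk.fst) (fun i ↦ (hP i).measurable_mk.snd)
    (hindep.congr fun i ↦ (hP i).ae_eq_mk)
    (fun i ↦ HasLaw.congr ⟨hP i, hlaw i⟩ (hP i).ae_eq_mk.symm) hJmeas
    (by filter_upwards [hJ, hPae] with ω h hω
        simpa only [← fun i ↦ congrArg Prod.fst (hω i)] using h)
    (ρ / c) (s / c)
  have hXJ : (fun ω ↦ X (J ω) ω) =ᵐ[ℙ] fun ω ↦ (P (J ω) ω).1 := by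
    filter_upwards [hPae] with ω hω using congrArg Prod.fst (hω (J ω))
  have hYJ : (fun ω ↦ Y (J ω) ω / c) =ᵐ[ℙ]
      fun ω ↦ ρ / c * (P (J ω) ω).1 + s / c * (P (J ω) ω).2 := by
    filter_upwards [hPae] with ω hω
    rw [hY, ← hω (J ω)]
    ring
  rw [variance_congr hYJ, hvar, ← variance_congr hXJ, ← hs]
  ring

/-- the variance of the max estimator `ρ̂_max = Y_J / E[X_J]` equals
`(ρ² Var(X_J) + (1 - ρ²)) / (E[X_J])²`. -/
theorem stmt1
    {Ω : Type*} [MeasureSpace Ω] [IsProbabilityMeasure (ℙ : Measure Ω)]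
    (ρ : ℝ) (hρ : ρ ∈ Set.Icc (-1 : ℝ) 1)
    (X Z : ℕ → Ω → ℝ)
    (hindep : iIndepFun (fun i ω => (X i ω, Z i ω)) ℙ)
    (hlaw : ∀ i, Measure.map (fun ω => (X i ω, Z i ω)) ℙ
      = (gaussianReal 0 1).prod (gaussianReal 0 1))
    (Y : ℕ → Ω → ℝ)
    (hY : ∀ i ω, Y i ω = ρ * X i ω + Real.sqrt (1 - ρ ^ 2) * Z i ω)
    (n : ℕ) (hn : 2 ≤ n)
    (J : Ω → ℕ) (hJmeas : Measurable J)
    (hJ : ∀ᵐ ω ∂ℙ, J ω < n ∧ ∀ i < n, X i ω ≤ X (J ω) ω) :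
    variance (fun ω => Y (J ω) ω / (∫ ω', X (J ω') ω')) ℙ
      = (ρ ^ 2 * variance (fun ω => X (J ω) ω) ℙ + (1 - ρ ^ 2))
        / (∫ ω', X (J ω') ω') ^ 2 :=
  stmt1_general ρ hρ X Z hindep hlaw Y hY n J hJmeas hJ
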